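/- arXiv:2206.03956 — 3 statements merged into one kernel-verified Lean document; each statement's English description precedes it below -/
import Mathlib

section
/- For the charge transfer function f(α) defined as 0 if α ≤ π/3, 3α/π − 1 if π/3 < α ≤ 2π/3, and 1 if α > 2π/3, if α₁,…,α₄ are positive reals summing to 2π, then f(α₁)+f(α₂)+f(α₃)+f(α₄) ≥ 1. -/
/-!
The charge is nonnegative and dominates `min 1 (3α/π - 1)`. So either some angle already carries
charge `1`, or every charge dominates the affine term `3αᵢ/π - 1`, and these sum to `6 - 4 = 2`.
-/

open Real

noncomputable def charge (α : ℝ) : ℝ :=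
  if α ≤ π / 3 then 0 else if α ≤ 2 * π / 3 then 3 * α / π - 1 else 1

theorem Finset.le_sum_of_min_le {ι R : Type*} [AddCommMonoid R] [LinearOrder R]
    [IsOrderedAddMonoid R] {s : Finset ι} {f g : ι → R} {c : R}
    (hf : ∀ i ∈ s, 0 ≤ f i) (hfg : ∀ i ∈ s, min c (g i) ≤ f i) (hg : c ≤ ∑ i ∈ s, g i) :
    c ≤ ∑ i ∈ s, f i := by
  by_cases hcap : ∀ i ∈ s, g i < c
  · calc c ≤ ∑ i ∈ s, g i := hg
      _ ≤ ∑ i ∈ s, f i := Finset.sum_le_sum fun i hi =>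
        (min_eq_right (hcap i hi).le).symm.trans_le (hfg i hi)
  · obtain ⟨i, hi, hci⟩ : ∃ i ∈ s, c ≤ g i := by
      simpa only [not_forall, not_lt, exists_prop] using hcap
    calc c = min c (g i) := (min_eq_left hci).symm
      _ ≤ f i := hfg i hi
      _ ≤ ∑ j ∈ s, f j := Finset.single_le_sum hf hi

lemma charge_nonneg (α : ℝ) : 0 ≤ charge α := by
  unfold charge
  split_ifs with h₁
  · rfl
  · rw [sub_nonneg, le_div_iff₀ pi_pos]
    linarith
  · exact zero_le_one

lemma min_one_le_charge (α : ℝ) : min 1 (3 * α / π - 1) ≤ charge α := by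
  unfold charge
  split_ifs with h₁
  · refine min_le_of_right_le ?_
    rw [sub_nonpos, div_le_one pi_pos]
    linarith
  · exact min_le_right _ _
  · exact min_le_left _ _

theorem degree_four_vertex_charge_general (α₁ α₂ α₃ α₄ : ℝ)
    (hsum : α₁ + α₂ + α₃ + α₄ = 2 * π) :
    charge α₁ + charge α₂ + charge α₃ + charge α₄ ≥ 1 := by
  set α : Fin 4 → ℝ := ![α₁, α₂, α₃, α₄]
  have hlin : 1 ≤ ∑ i, (3 * α i / π - 1) := by
    have : ∑ i, (3 * α i / π - 1) = 3 * (α₁ + α₂ + α₃ + α₄) / π - 4 := by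
      simp only [Fin.sum_univ_four, α, Matrix.cons_val]
      ring
    rw [this, hsum, mul_div_assoc, mul_div_cancel_right₀ _ pi_ne_zero]
    norm_num
  have h := Finset.le_sum_of_min_le (fun i _ => charge_nonneg (α i))
    (fun i _ => min_one_le_charge (α i)) hlin
  simpa only [Fin.sum_univ_four, α, Matrix.cons_val] using h

theorem degree_four_vertex_charge (α₁ α₂ α₃ α₄ : ℝ)
    (h₁ : 0 < α₁) (h₂ : 0 < α₂) (h₃ : 0 < α₃) (h₄ : 0 < α₄)
    (hsum : α₁ + α₂ + α₃ + α₄ = 2 * π) :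
    charge α₁ + charge α₂ + charge α₃ + charge α₄ ≥ 1 :=
  degree_four_vertex_charge_general α₁ α₂ α₃ α₄ hsum
end

section
/- For the charge transfer function f(α) defined as 0 if α ≤ π/3, 3α/π − 1 if π/3 < α ≤ 2π/3, and 1 if α > 2π/3, if α₁,…,α₅ are positive reals summing to 3π, then f(α₁)+⋯+f(α₅) ≤ 4. -/
/-! Either some angle is at most `π / 3`, so its corner sends nothing and each other corner sends
at most `1`; or every angle exceeds `π / 3`, and then `charge α ≤ 3α/π - 1`, whose sum over the
angles of an `n`-gon (total `(n - 2)π`) is `3(n - 2) - n = 2n - 6 ≤ n - 1` as long as `n ≤ 5`. -/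

open Real

lemma charge_eq_zero_of_le {α : ℝ} (h : α ≤ π / 3) : charge α = 0 := if_pos h

lemma charge_le_one (α : ℝ) : charge α ≤ 1 := by
  unfold charge
  split_ifs with hsmall hmid
  · exact zero_le_one
  · rw [sub_le_iff_le_add, div_le_iff₀ pi_pos]
    linarith
  · exact le_rfl

lemma charge_le_of_lt {α : ℝ} (h : π / 3 < α) : charge α ≤ 3 * α / π - 1 := by
  unfold charge
  split_ifs with hsmall hmid
  · exact absurd hsmall h.not_ge
  · exact le_rfl
  · rw [le_sub_iff_add_le, le_div_iff₀ pi_pos]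
    linarith

section Polygon

open Finset

variable {ι : Type*} [Fintype ι] (α : ι → ℝ)

lemma sum_charge_le_card_sub_one_of_exists_le (h : ∃ i, α i ≤ π / 3) :
    ∑ i, charge (α i) ≤ Fintype.card ι - 1 := by
  classical
  obtain ⟨i, hi⟩ := h
  rw [← add_sum_erase _ _ (mem_univ i), charge_eq_zero_of_le hi, zero_add]
  calc ∑ j ∈ univ.erase i, charge (α j)
      ≤ #(univ.erase i) • (1 : ℝ) := sum_le_card_nsmul _ _ _ fun j _ ↦ charge_le_one (α j)
    _ = Fintype.card ι - 1 := by
      rw [card_erase_of_mem (mem_univ i), nsmul_one, card_univ,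
        Nat.cast_sub (Fintype.card_pos_iff.mpr ⟨i⟩), Nat.cast_one]

lemma sum_charge_le_of_forall_lt (h : ∀ i, π / 3 < α i) :
    ∑ i, charge (α i) ≤ 3 * (∑ i, α i) / π - Fintype.card ι :=
  calc ∑ i, charge (α i) ≤ ∑ i, (3 * α i / π - 1) := sum_le_sum fun i _ ↦ charge_le_of_lt (h i)
    _ = 3 * (∑ i, α i) / π - Fintype.card ι := by
      rw [sum_sub_distrib, ← sum_div, ← mul_sum, sum_const, card_univ, nsmul_one]

theorem sum_charge_le_card_sub_one (hcard : Fintype.card ι ≤ 5)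
    (hsum : ∑ i, α i = (Fintype.card ι - 2) * π) :
    ∑ i, charge (α i) ≤ Fintype.card ι - 1 := by
  by_cases hsmall : ∃ i, α i ≤ π / 3
  · exact sum_charge_le_card_sub_one_of_exists_le α hsmall
  · simp only [not_exists, not_le] at hsmall
    have hcard_real : (Fintype.card ι : ℝ) ≤ 5 := by exact_mod_cast hcard
    calc ∑ i, charge (α i) ≤ 3 * (∑ i, α i) / π - Fintype.card ι :=
          sum_charge_le_of_forall_lt α hsmall
      _ = 2 * Fintype.card ι - 6 := by
          rw [hsum, mul_div_assoc, mul_div_cancel_right₀ _ pi_ne_zero]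
          ring
      _ ≤ Fintype.card ι - 1 := by linarith

end Polygon

theorem pentagon_charge_general (α₁ α₂ α₃ α₄ α₅ : ℝ)
    (hsum : α₁ + α₂ + α₃ + α₄ + α₅ = 3 * π) :
    charge α₁ + charge α₂ + charge α₃ + charge α₄ + charge α₅ ≤ 4 := by
  have h := sum_charge_le_card_sub_one ![α₁, α₂, α₃, α₄, α₅] (by simp)
    (by simp only [Fin.sum_univ_five, Matrix.cons_val, Fintype.card_fin]; rw [hsum]; norm_num)
  simp only [Fin.sum_univ_five, Matrix.cons_val, Fintype.card_fin] at h
  norm_num at h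
  exact h

theorem pentagon_charge (α₁ α₂ α₃ α₄ α₅ : ℝ)
    (h₁ : 0 < α₁) (h₂ : 0 < α₂) (h₃ : 0 < α₃) (h₄ : 0 < α₄) (h₅ : 0 < α₅)
    (hsum : α₁ + α₂ + α₃ + α₄ + α₅ = 3 * π) :
    charge α₁ + charge α₂ + charge α₃ + charge α₄ + charge α₅ ≤ 4 :=
  pentagon_charge_general α₁ α₂ α₃ α₄ α₅ hsum
end

section
/- Suppose nonnegative integers n, n₁, n₂, n₃, n₄, f₃, and positive real b satisfy: (i) 4n₁+3n₂+2n₃+n₄ ≥ b + 6, (ii) f₃ ≥ n − √(π√3·n) + 8 whenever 4n₁+3n₂+2n₃+n₄ ≤ √(π√3·n), and (iii) b² > π√3·f₃. Then 4n₁+3n₂+2n₃+n₄ > √(π√3·n). -/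
/-!
Suppose the weighted count `s = 4n₁ + 3n₂ + 2n₃ + n₄` were at most `r = √(π√3 n)`. Then
`b ≤ r - 6`, so `b² ≤ r² - 12r + 36`, while `π√3 f₃ ≥ r² - π√3 r + 8π√3`. Since
`9/2 ≤ π√3 ≤ 12` the second bound dominates the first, contradicting `b² > π√3 f₃`.
-/

open Real

theorem sq_le_mul_of_add_six_le_sqrt {c n f b : ℝ} (hc : 9 / 2 ≤ c) (hc' : c ≤ 12)
    (hn : 0 ≤ n) (hb : 0 ≤ b) (hbr : b + 6 ≤ √(c * n)) (hf : n - √(c * n) + 8 ≤ f) :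
    b ^ 2 ≤ c * f := by
  set r := √(c * n)
  have hr : r ^ 2 = c * n := sq_sqrt (by positivity)
  have hr0 : 0 ≤ r := sqrt_nonneg _
  calc b ^ 2 ≤ (r - 6) ^ 2 := pow_le_pow_left₀ hb (by linarith) 2
    _ = c * n - 12 * r + 36 := by rw [sub_sq, hr]; ring
    _ ≤ c * (n - r + 8) := by nlinarith [mul_nonneg (sub_nonneg.2 hc') hr0]
    _ ≤ c * f := by gcongr

theorem nine_half_le_pi_mul_sqrt_three : 9 / 2 ≤ π * √3 := by
  have : (3 / 2 : ℝ) < √3 := (lt_sqrt (by norm_num)).2 (by norm_num)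
  nlinarith [pi_gt_three]

theorem pi_mul_sqrt_three_le_twelve : π * √3 ≤ 12 := by
  have : √3 < 2 := (sqrt_lt' (by norm_num)).2 (by norm_num)
  nlinarith [pi_lt_four, sqrt_nonneg 3]

theorem main_arithmetic_core (n n₁ n₂ n₃ n₄ f₃ : ℕ) (b : ℝ) (hb : 0 < b)
    (h1 : (4 * n₁ + 3 * n₂ + 2 * n₃ + n₄ : ℝ) ≥ b + 6)
    (h2 : (4 * n₁ + 3 * n₂ + 2 * n₃ + n₄ : ℝ) ≤ Real.sqrt (π * Real.sqrt 3 * n) →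
      (f₃ : ℝ) ≥ (n : ℝ) - Real.sqrt (π * Real.sqrt 3 * n) + 8)
    (h3 : b ^ 2 > π * Real.sqrt 3 * f₃) :
    (4 * n₁ + 3 * n₂ + 2 * n₃ + n₄ : ℝ) > Real.sqrt (π * Real.sqrt 3 * n) := by
  by_contra! hs
  exact h3.not_ge <| sq_le_mul_of_add_six_le_sqrt nine_half_le_pi_mul_sqrt_three
    pi_mul_sqrt_three_le_twelve n.cast_nonneg hb.le (h1.trans hs) (h2 hs)
end
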